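/- Let m ≥ 1, let M, N ⊆ [m] with N ≠ ∅ and M ⊄ N, and let D = aΔ_M + cΔ_N ⊆ E^m. Then the binary Gray image Φ(C^R_D) is an F₂-linear code of length 2^{|M|+|N|+1}, with 2^{|M∪N|} codewords (F₂-dimension |M∪N|), whose nonzero codewords take exactly the two Hamming weights 2^{|M|+|N|} and 2^{|M|+|N|−1}; in particular its minimum distance is 2^{|M|+|N|−1}. Moreover, if |M|+|N| ≥ 3, then Φ(C^R_D) is self-orthogonal. -/
import Mathlib


open Finset

/-- The simplicial complex `Δ_M ⊆ 𝔽₂^m` generated by `M ⊆ [m]`: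
all vectors whose support is contained in `M`. -/
def deltaC {m : ℕ} (M : Finset (Fin m)) : Finset (Fin m → ZMod 2) :=
  Finset.univ.filter (fun w => ∀ i, w i ≠ 0 → i ∈ M)

/-- Dot product over `𝔽₂`. -/
def dotp {m : ℕ} (x y : Fin m → ZMod 2) : ZMod 2 := ∑ i, x i * y i

/-- The Gray map on a single element `a·s + c·t ↔ (s, t)` of `E = 𝔽₂ × 𝔽₂`:
`Φ(as + ct) = (t, s + t)`. -/
def grayPair (e : ZMod 2 × ZMod 2) : Fin 2 → ZMod 2 := ![e.2, e.1 + e.2]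

/-- The left codeword `c^L_D(v)` for `v = aα + cβ ↔ (α, β)`:
its coordinate at `d = (t₁, t₂) ∈ D` is `a(α·t₁) + c(β·t₁) ↔ (α·t₁, β·t₁)`. -/
def cwL {m : ℕ} (Ds : Finset ((Fin m → ZMod 2) × (Fin m → ZMod 2)))
    (v : (Fin m → ZMod 2) × (Fin m → ZMod 2)) :
    {d // d ∈ Ds} → ZMod 2 × ZMod 2 :=
  fun d => (dotp v.1 d.1.1, dotp v.2 d.1.1)

/-- The Gray image `Φ(c^L_D(v)) ∈ 𝔽₂^{2|D|}` of the left codeword `c^L_D(v)`;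
its Hamming weight (`hammingNorm`) is the Lee weight of `c^L_D(v)`. -/
def gcwL {m : ℕ} (Ds : Finset ((Fin m → ZMod 2) × (Fin m → ZMod 2)))
    (v : (Fin m → ZMod 2) × (Fin m → ZMod 2)) :
    {d // d ∈ Ds} × Fin 2 → ZMod 2 :=
  fun x => grayPair (cwL Ds v x.1) x.2

/-- The right codeword `c^R_D(v)` for `v = aα + cβ ↔ (α, β)`:
its coordinate at `d = (t₁, t₂) ∈ D` is `a(t₁·α) + c(t₂·α) ↔ (t₁·α, t₂·α)`. -/
def cwR {m : ℕ} (Ds : Finset ((Fin m → ZMod 2) × (Fin m → ZMod 2)))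
    (v : (Fin m → ZMod 2) × (Fin m → ZMod 2)) :
    {d // d ∈ Ds} → ZMod 2 × ZMod 2 :=
  fun d => (dotp d.1.1 v.1, dotp d.1.2 v.1)

/-- The Gray image `Φ(c^R_D(v)) ∈ 𝔽₂^{2|D|}` of the right codeword `c^R_D(v)`;
its Hamming weight (`hammingNorm`) is the Lee weight of `c^R_D(v)`. -/
def gcwR {m : ℕ} (Ds : Finset ((Fin m → ZMod 2) × (Fin m → ZMod 2)))
    (v : (Fin m → ZMod 2) × (Fin m → ZMod 2)) :
    {d // d ∈ Ds} × Fin 2 → ZMod 2 :=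
  fun x => grayPair (cwR Ds v x.1) x.2


section helpers
variable {m : ℕ}

lemma zmod2_ne_zero_iff : ∀ x : ZMod 2, (x ≠ 0 ↔ x = 1) := by decide

lemma zmod2_cases : ∀ x : ZMod 2, x = 0 ∨ x = 1 := by decide

lemma add_self_fn (x : Fin m → ZMod 2) : x + x = 0 :=
  funext fun _ => CharTwo.add_self_eq_zero _

lemma mem_deltaC {S : Finset (Fin m)} {w : Fin m → ZMod 2} :
    w ∈ deltaC S ↔ ∀ i, w i ≠ 0 → i ∈ S := by
  simp [deltaC]

lemma zero_mem_deltaC {S : Finset (Fin m)} : (0 : Fin m → ZMod 2) ∈ deltaC S := by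
  simp [mem_deltaC]

def stdb (i : Fin m) : Fin m → ZMod 2 := fun j => if j = i then 1 else 0

lemma stdb_mem_deltaC {S : Finset (Fin m)} {i : Fin m} (hi : i ∈ S) : stdb i ∈ deltaC S := by
  rw [mem_deltaC]
  intro j hj
  by_contra h
  simp [stdb] at hj
  rcases hj with ⟨rfl, _⟩
  exact h hi

lemma dotp_stdb (i : Fin m) (α : Fin m → ZMod 2) : dotp (stdb i) α = α i := by
  unfold dotp stdb
  rw [Finset.sum_eq_single i]
  · simp
  · intro b _ hb; simp [hb]
  · simp

lemma dotp_zero (α : Fin m → ZMod 2) : dotp 0 α = 0 := by simp [dotp]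

lemma dotp_add_left (x y α : Fin m → ZMod 2) :
    dotp (x + y) α = dotp x α + dotp y α := by
  simp [dotp, add_mul, Finset.sum_add_distrib]

lemma dotp_add_right (α x y : Fin m → ZMod 2) :
    dotp α (x + y) = dotp α x + dotp α y := by
  simp [dotp, mul_add, Finset.sum_add_distrib]

lemma dotp_congr {S : Finset (Fin m)} {t α α' : Fin m → ZMod 2} (ht : t ∈ deltaC S)
    (h : ∀ i ∈ S, α i = α' i) : dotp t α = dotp t α' := by
  unfold dotp
  apply Finset.sum_congr rfl
  intro i _
  by_cases hti : t i = 0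
  · simp [hti]
  · rw [h i (mem_deltaC.1 ht i hti)]

lemma dotp_eq_zero {S : Finset (Fin m)} {t α : Fin m → ZMod 2} (ht : t ∈ deltaC S)
    (h : ∀ i ∈ S, α i = 0) : dotp t α = 0 := by
  rw [dotp_congr ht (α' := 0) h, dotp]
  simp

lemma card_deltaC (S : Finset (Fin m)) : (deltaC S).card = 2 ^ S.card := by
  have := Finset.card_bij' (s := deltaC S)
    (t := (Finset.univ : Finset ({i // i ∈ S} → ZMod 2)))
    (i := fun w _ => fun i => w i.1)
    (j := fun g _ => fun j => if h : j ∈ S then g ⟨j, h⟩ else 0)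
    (by exact fun _ _ => Finset.mem_univ _)
    (by
      intro g _
      rw [mem_deltaC]
      intro i hi
      by_contra h
      simp only [dif_neg h] at hi
      exact hi rfl)
    (by
      intro w hw
      funext j
      by_cases h : j ∈ S
      · simp [h]
      · simp [h]
        by_contra hne
        exact h (mem_deltaC.1 hw j (Ne.symm hne)))
    (by intro g _; funext i; simp)
  rw [this, Finset.card_univ, Fintype.card_fun]
  simp

lemma count_dotp {S : Finset (Fin m)} {α : Fin m → ZMod 2} {i : Fin m}
    (hi : i ∈ S) (hα : α i ≠ 0) (c : ZMod 2) :
    ((deltaC S).filter (fun t => dotp t α = c)).card = 2 ^ (S.card - 1) := by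
  have hα1 : α i = 1 := (zmod2_ne_zero_iff _).1 hα
  have hmem : ∀ t ∈ deltaC S, t + stdb i ∈ deltaC S := by
    intro t ht
    rw [mem_deltaC]
    intro j hj
    by_cases hji : j = i
    · exact hji ▸ hi
    · apply mem_deltaC.1 ht j
      intro h0
      simp [stdb, hji, h0] at hj
  have key : ∀ c : ZMod 2, ((deltaC S).filter (fun t => dotp t α = c)).card =
      ((deltaC S).filter (fun t => dotp t α = c + 1)).card := by
    intro c
    apply Finset.card_bij (fun t _ => t + stdb i)
    · intro t ht
      simp only [Finset.mem_filter] at ht ⊢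
      exact ⟨hmem t ht.1, by rw [dotp_add_left, ht.2, dotp_stdb, hα1]⟩
    · intro t₁ h₁ t₂ h₂ h
      have : t₁ + stdb i + stdb i = t₂ + stdb i + stdb i := by rw [h]
      simpa [add_assoc, add_self_fn] using this
    · intro t ht
      simp only [Finset.mem_filter] at ht
      refine ⟨t + stdb i, Finset.mem_filter.2 ⟨hmem t ht.1, ?_⟩, ?_⟩
      · rw [dotp_add_left, ht.2, dotp_stdb, hα1, add_assoc,
          show (1 : ZMod 2) + 1 = 0 by decide, add_zero]
      · simp [add_assoc, add_self_fn]
  have h01 : ((deltaC S).filter (fun t => dotp t α = 0)).card =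
      ((deltaC S).filter (fun t => dotp t α = 1)).card := by
    simpa using key 0
  have hsum : ((deltaC S).filter (fun t => dotp t α = 0)).card +
      ((deltaC S).filter (fun t => dotp t α = 1)).card = 2 ^ S.card := by
    have hf : (deltaC S).filter (fun t => dotp t α = 1) =
        (deltaC S).filter (fun t => ¬ dotp t α = 0) := by
      apply Finset.filter_congr
      intro t _
      simp [← zmod2_ne_zero_iff]
    rw [hf, Finset.card_filter_add_card_filter_not, card_deltaC]
  have hScard : 1 ≤ S.card := Finset.card_pos.2 ⟨i, hi⟩
  have hpow : 2 ^ S.card = 2 * 2 ^ (S.card - 1) := by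
    rw [← pow_succ']
    congr 1
    omega
  rcases zmod2_cases c with rfl | rfl <;> omega

end helpers

section more
variable {m : ℕ}

lemma grayPair_zero (e : ZMod 2 × ZMod 2) : grayPair e 0 = e.2 := rfl
lemma grayPair_one (e : ZMod 2 × ZMod 2) : grayPair e 1 = e.1 + e.2 := rfl

lemma sum_pairs {γ : Type} [AddCommMonoid γ] (M N : Finset (Fin m))
    (Ds : Finset ((Fin m → ZMod 2) × (Fin m → ZMod 2)))
    (hDs : Ds = deltaC M ×ˢ deltaC N)
    (f : ((Fin m → ZMod 2) × (Fin m → ZMod 2)) → Fin 2 → γ) :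
    ∑ x : {d // d ∈ Ds} × Fin 2, f x.1.1 x.2 =
    ∑ t₁ ∈ deltaC M, ∑ t₂ ∈ deltaC N, (f (t₁, t₂) 0 + f (t₁, t₂) 1) := by
  rw [Fintype.sum_prod_type]
  simp only [Fin.sum_univ_two]
  rw [Finset.sum_coe_sort Ds (fun d => f d 0 + f d 1), hDs, Finset.sum_product]

end more


section weight
variable {m : ℕ} {M N : Finset (Fin m)}
  {Ds : Finset ((Fin m → ZMod 2) × (Fin m → ZMod 2))}

lemma hn_eq (hDs : Ds = deltaC M ×ˢ deltaC N)
    (v : (Fin m → ZMod 2) × (Fin m → ZMod 2)) :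
    hammingNorm (gcwR Ds v) =
    ∑ t₁ ∈ deltaC M, ∑ t₂ ∈ deltaC N,
      ((if dotp t₂ v.1 = 1 then 1 else 0) +
       (if dotp t₁ v.1 + dotp t₂ v.1 = 1 then 1 else 0)) := by
  have h0 : hammingNorm (gcwR Ds v) =
      ∑ x : {d // d ∈ Ds} × Fin 2,
        (fun (t : (Fin m → ZMod 2) × (Fin m → ZMod 2)) (j : Fin 2) =>
          if grayPair (dotp t.1 v.1, dotp t.2 v.1) j ≠ 0 then 1 else 0) x.1.1 x.2 := by
    rw [hammingNorm, Finset.card_filter]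
    rfl
  rw [h0, sum_pairs M N Ds hDs
    (fun t j => if grayPair (dotp t.1 v.1, dotp t.2 v.1) j ≠ 0 then 1 else 0)]
  apply Finset.sum_congr rfl; intro t₁ _
  apply Finset.sum_congr rfl; intro t₂ _
  simp [grayPair_zero, grayPair_one, zmod2_ne_zero_iff]

lemma sum_ite_dotp_pos {S : Finset (Fin m)} {α : Fin m → ZMod 2}
    (hA : ∃ i ∈ S, α i ≠ 0) (c : ZMod 2) :
    ∑ t ∈ deltaC S, (if dotp t α = c then (1 : ℕ) else 0) = 2 ^ (S.card - 1) := by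
  rw [← Finset.card_filter]
  obtain ⟨i, hi, hαi⟩ := hA
  exact count_dotp hi hαi c

lemma sum_ite_dotp_zero {S : Finset (Fin m)} {α : Fin m → ZMod 2}
    (h0 : ∀ i ∈ S, α i = 0) :
    ∑ t ∈ deltaC S, (if dotp t α = 1 then (1 : ℕ) else 0) = 0 := by
  apply Finset.sum_eq_zero
  intro t ht
  rw [dotp_eq_zero ht h0]
  norm_num

lemma weight_B (hDs : Ds = deltaC M ×ˢ deltaC N) (hM : 1 ≤ M.card) (hNc : 1 ≤ N.card)
    (v : (Fin m → ZMod 2) × (Fin m → ZMod 2)) (hB : ∃ i ∈ N, v.1 i ≠ 0) :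
    hammingNorm (gcwR Ds v) = 2 ^ (M.card + N.card) := by
  rw [hn_eq hDs v]
  simp only [Finset.sum_add_distrib]
  have hP1 : ∑ t₁ ∈ deltaC M, ∑ t₂ ∈ deltaC N,
      (if dotp t₂ v.1 = 1 then (1:ℕ) else 0) = 2 ^ (M.card + N.card - 1) := by
    rw [Finset.sum_congr rfl (fun t₁ _ => sum_ite_dotp_pos hB 1), Finset.sum_const,
      card_deltaC, smul_eq_mul, ← pow_add]
    congr 1; omega
  have hP2 : ∑ t₁ ∈ deltaC M, ∑ t₂ ∈ deltaC N,
      (if dotp t₁ v.1 + dotp t₂ v.1 = 1 then (1:ℕ) else 0) = 2 ^ (M.card + N.card - 1) := by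
    by_cases hA : ∃ i ∈ M, v.1 i ≠ 0
    · rw [Finset.sum_comm]
      have hiff : ∀ x y : ZMod 2, ((x + y = 1) ↔ (x = 1 + y)) := by decide
      have hin : ∀ t₂ ∈ deltaC N, ∑ t₁ ∈ deltaC M,
          (if dotp t₁ v.1 + dotp t₂ v.1 = 1 then (1:ℕ) else 0) = 2 ^ (M.card - 1) := by
        intro t₂ _
        rw [Finset.sum_congr rfl (fun t₁ _ => if_congr (hiff _ _) rfl rfl)]
        exact sum_ite_dotp_pos hA (1 + dotp t₂ v.1)
      rw [Finset.sum_congr rfl hin, Finset.sum_const, card_deltaC, smul_eq_mul, ← pow_add]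
      congr 1; omega
    · push_neg at hA
      have hin : ∀ t₁ ∈ deltaC M, ∑ t₂ ∈ deltaC N,
          (if dotp t₁ v.1 + dotp t₂ v.1 = 1 then (1:ℕ) else 0) = 2 ^ (N.card - 1) := by
        intro t₁ ht₁
        have hz : dotp t₁ v.1 = 0 := dotp_eq_zero ht₁ hA
        simp only [hz, zero_add]
        exact sum_ite_dotp_pos hB 1
      rw [Finset.sum_congr rfl hin, Finset.sum_const, card_deltaC, smul_eq_mul, ← pow_add]
      congr 1; omega
  rw [hP1, hP2, ← two_mul, ← pow_succ']
  congr 1; omega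

lemma weight_AnotB (hDs : Ds = deltaC M ×ˢ deltaC N) (hM : 1 ≤ M.card) (hNc : 1 ≤ N.card)
    (v : (Fin m → ZMod 2) × (Fin m → ZMod 2)) (hA : ∃ i ∈ M, v.1 i ≠ 0)
    (hB0 : ∀ i ∈ N, v.1 i = 0) :
    hammingNorm (gcwR Ds v) = 2 ^ (M.card + N.card - 1) := by
  rw [hn_eq hDs v]
  simp only [Finset.sum_add_distrib]
  have hP1 : ∑ t₁ ∈ deltaC M, ∑ t₂ ∈ deltaC N,
      (if dotp t₂ v.1 = 1 then (1:ℕ) else 0) = 0 :=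
    Finset.sum_eq_zero (fun t₁ _ => sum_ite_dotp_zero hB0)
  have hP2 : ∑ t₁ ∈ deltaC M, ∑ t₂ ∈ deltaC N,
      (if dotp t₁ v.1 + dotp t₂ v.1 = 1 then (1:ℕ) else 0) = 2 ^ (M.card + N.card - 1) := by
    rw [Finset.sum_comm]
    have hiff : ∀ x y : ZMod 2, ((x + y = 1) ↔ (x = 1 + y)) := by decide
    have hin : ∀ t₂ ∈ deltaC N, ∑ t₁ ∈ deltaC M,
        (if dotp t₁ v.1 + dotp t₂ v.1 = 1 then (1:ℕ) else 0) = 2 ^ (M.card - 1) := by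
      intro t₂ _
      rw [Finset.sum_congr rfl (fun t₁ _ => if_congr (hiff _ _) rfl rfl)]
      exact sum_ite_dotp_pos hA (1 + dotp t₂ v.1)
    rw [Finset.sum_congr rfl hin, Finset.sum_const, card_deltaC, smul_eq_mul, ← pow_add]
    congr 1; omega
  rw [hP1, hP2, zero_add]

lemma gcwR_zero (hDs : Ds = deltaC M ×ˢ deltaC N)
    (v : (Fin m → ZMod 2) × (Fin m → ZMod 2)) (h0 : ∀ i ∈ M ∪ N, v.1 i = 0) :
    gcwR Ds v = 0 := by
  funext x
  obtain ⟨⟨⟨t₁, t₂⟩, hd⟩, j⟩ := x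
  rw [hDs, Finset.mem_product] at hd
  have h1 : dotp t₁ v.1 = 0 :=
    dotp_eq_zero hd.1 (fun i hi => h0 i (Finset.mem_union_left _ hi))
  have h2 : dotp t₂ v.1 = 0 :=
    dotp_eq_zero hd.2 (fun i hi => h0 i (Finset.mem_union_right _ hi))
  show grayPair (dotp t₁ v.1, dotp t₂ v.1) j = 0
  rw [h1, h2]
  fin_cases j <;> simp [grayPair]

lemma gcwR_add (Ds : Finset ((Fin m → ZMod 2) × (Fin m → ZMod 2)))
    (v w : (Fin m → ZMod 2) × (Fin m → ZMod 2)) :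
    gcwR Ds (v + w) = gcwR Ds v + gcwR Ds w := by
  funext x
  obtain ⟨d, j⟩ := x
  show grayPair (dotp d.1.1 (v + w).1, dotp d.1.2 (v + w).1) j
      = grayPair (dotp d.1.1 v.1, dotp d.1.2 v.1) j + grayPair (dotp d.1.1 w.1, dotp d.1.2 w.1) j
  have hv : (v + w).1 = v.1 + w.1 := rfl
  rw [hv, dotp_add_right, dotp_add_right]
  fin_cases j <;> simp [grayPair] <;> ring

lemma sum_dotp_even {S : Finset (Fin m)} (hS : S.card ≠ 1) (α : Fin m → ZMod 2) :
    ∑ t ∈ deltaC S, dotp t α = 0 := by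
  have hx : ∀ x : ZMod 2, x = if x = 1 then 1 else 0 := by decide
  have h1 : ∑ t ∈ deltaC S, dotp t α =
      ((((deltaC S).filter (fun t => dotp t α = 1)).card : ℕ) : ZMod 2) := by
    rw [← Finset.sum_boole]
    exact Finset.sum_congr rfl fun t _ => hx _
  rw [h1]
  by_cases hA : ∃ i ∈ S, α i ≠ 0
  · obtain ⟨i, hi, hαi⟩ := hA
    rw [count_dotp hi hαi]
    have h2 : 2 ≤ S.card := by
      have : 1 ≤ S.card := Finset.card_pos.2 ⟨i, hi⟩
      omega
    push_cast
    rw [show (2 : ZMod 2) = 0 by decide]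
    exact zero_pow (by omega)
  · push_neg at hA
    have : (deltaC S).filter (fun t => dotp t α = 1) = ∅ := by
      apply Finset.filter_eq_empty_iff.2
      intro t ht
      rw [dotp_eq_zero ht hA]
      decide
    rw [this]
    simp

lemma two_pow_cast_zero {n : ℕ} (hn : 1 ≤ n) : ((2 ^ n : ℕ) : ZMod 2) = 0 := by
  push_cast
  rw [show (2 : ZMod 2) = 0 by decide]
  exact zero_pow (by omega)

end weight


theorem stmt_15 {m : ℕ} (hm : 1 ≤ m) (M N : Finset (Fin m))
    (hN : N ≠ ∅) (hMN : ¬ M ⊆ N)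
    (Ds : Finset ((Fin m → ZMod 2) × (Fin m → ZMod 2)))
    (hDs : Ds = deltaC M ×ˢ deltaC N) :
    (2 * Ds.card = 2 ^ (M.card + N.card + 1)) ∧
    ((Finset.univ : Finset ((Fin m → ZMod 2) × (Fin m → ZMod 2))).image (gcwR Ds)).card = 2 ^ (M ∪ N).card ∧
    (∀ v w : (Fin m → ZMod 2) × (Fin m → ZMod 2), ∃ z : (Fin m → ZMod 2) × (Fin m → ZMod 2), gcwR Ds z = gcwR Ds v + gcwR Ds w) ∧
    (∀ v : (Fin m → ZMod 2) × (Fin m → ZMod 2), gcwR Ds v ≠ 0 →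
        hammingNorm (gcwR Ds v) = 2 ^ (M.card + N.card) ∨
        hammingNorm (gcwR Ds v) = 2 ^ (M.card + N.card - 1)) ∧
    (∃ v : (Fin m → ZMod 2) × (Fin m → ZMod 2), gcwR Ds v ≠ 0 ∧ hammingNorm (gcwR Ds v) = 2 ^ (M.card + N.card)) ∧
    (∀ v : (Fin m → ZMod 2) × (Fin m → ZMod 2), gcwR Ds v ≠ 0 → 2 ^ (M.card + N.card - 1) ≤ hammingNorm (gcwR Ds v)) ∧
    (∃ v : (Fin m → ZMod 2) × (Fin m → ZMod 2), gcwR Ds v ≠ 0 ∧ hammingNorm (gcwR Ds v) = 2 ^ (M.card + N.card - 1)) ∧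
    (3 ≤ M.card + N.card →
      ∀ v w : (Fin m → ZMod 2) × (Fin m → ZMod 2), ∑ i, gcwR Ds v i * gcwR Ds w i = 0) := by
  obtain ⟨i₀, hi₀M, hi₀N⟩ := Finset.not_subset.1 hMN
  obtain ⟨j₀, hj₀⟩ := Finset.nonempty_of_ne_empty hN
  have hMcard : 1 ≤ M.card := Finset.card_pos.2 ⟨i₀, hi₀M⟩
  have hNcard : 1 ≤ N.card := Finset.card_pos.2 ⟨j₀, hj₀⟩
  -- claim 4 first (used by claim 6)
  have claim4 : ∀ v : (Fin m → ZMod 2) × (Fin m → ZMod 2), gcwR Ds v ≠ 0 →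
      hammingNorm (gcwR Ds v) = 2 ^ (M.card + N.card) ∨
      hammingNorm (gcwR Ds v) = 2 ^ (M.card + N.card - 1) := by
    intro v hv
    by_cases hB : ∃ i ∈ N, v.1 i ≠ 0
    · exact Or.inl (weight_B hDs hMcard hNcard v hB)
    · push_neg at hB
      by_cases hA : ∃ i ∈ M, v.1 i ≠ 0
      · exact Or.inr (weight_AnotB hDs hMcard hNcard v hA hB)
      · push_neg at hA
        exfalso
        apply hv
        apply gcwR_zero hDs
        intro i hi
        rcases Finset.mem_union.1 hi with h | h
        · exact hA i h
        · exact hB i h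
  refine ⟨?_, ?_, ?_, claim4, ?_, ?_, ?_, ?_⟩
  · -- claim 1
    rw [hDs, Finset.card_product, card_deltaC, card_deltaC, ← pow_add, ← pow_succ']
  · -- claim 2
    have himg : ((Finset.univ : Finset ((Fin m → ZMod 2) × (Fin m → ZMod 2))).image (gcwR Ds))
        = (deltaC (M ∪ N)).image (fun α => gcwR Ds (α, 0)) := by
      apply Finset.ext
      intro cw
      simp only [Finset.mem_image, Finset.mem_univ, true_and]
      constructor
      · rintro ⟨v, rfl⟩
        refine ⟨fun i => if i ∈ M ∪ N then v.1 i else 0, ?_, ?_⟩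
        · rw [mem_deltaC]
          intro i hi
          by_contra h
          simp only [if_neg h] at hi
          exact hi rfl
        · funext x
          obtain ⟨⟨⟨t₁, t₂⟩, hd⟩, j⟩ := x
          rw [hDs, Finset.mem_product] at hd
          have e1 : dotp t₁ (fun i => if i ∈ M ∪ N then v.1 i else 0) = dotp t₁ v.1 :=
            dotp_congr hd.1 (fun i hi => by rw [if_pos (Finset.mem_union_left _ hi)])
          have e2 : dotp t₂ (fun i => if i ∈ M ∪ N then v.1 i else 0) = dotp t₂ v.1 :=
            dotp_congr hd.2 (fun i hi => by rw [if_pos (Finset.mem_union_right _ hi)])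
          show grayPair (dotp t₁ _, dotp t₂ _) j = grayPair (dotp t₁ v.1, dotp t₂ v.1) j
          rw [e1, e2]
      · rintro ⟨α, _, rfl⟩
        exact ⟨(α, 0), rfl⟩
    rw [himg, Finset.card_image_of_injOn, card_deltaC]
    intro α hα α' hα' h
    funext i
    by_cases hiM : i ∈ M
    · have hd : ((stdb i, (0 : Fin m → ZMod 2)) : _ × _) ∈ Ds := by
        rw [hDs, Finset.mem_product]
        exact ⟨stdb_mem_deltaC hiM, zero_mem_deltaC⟩
      have hc := congrFun h (⟨(stdb i, 0), hd⟩, 1)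
      have hLHS : ∀ β : Fin m → ZMod 2,
          gcwR Ds (β, 0) (⟨(stdb i, 0), hd⟩, 1) = β i := by
        intro β
        show grayPair (dotp (stdb i) β, dotp 0 β) 1 = β i
        rw [grayPair_one, dotp_stdb, dotp_zero, add_zero]
      simpa only [hLHS α, hLHS α'] using hc
    · by_cases hiN : i ∈ N
      · have hd : (((0 : Fin m → ZMod 2), stdb i) : _ × _) ∈ Ds := by
          rw [hDs, Finset.mem_product]
          exact ⟨zero_mem_deltaC, stdb_mem_deltaC hiN⟩
        have hc := congrFun h (⟨(0, stdb i), hd⟩, 0)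
        have hLHS : ∀ β : Fin m → ZMod 2,
            gcwR Ds (β, 0) (⟨(0, stdb i), hd⟩, 0) = β i := by
          intro β
          show grayPair (dotp 0 β, dotp (stdb i) β) 0 = β i
          rw [grayPair_zero, dotp_stdb]
        simpa only [hLHS α, hLHS α'] using hc
      · have hiMN : i ∉ M ∪ N := by
          rw [Finset.mem_union]
          tauto
        have z1 : α i = 0 := by
          by_contra hne
          exact hiMN (mem_deltaC.1 hα i hne)
        have z2 : α' i = 0 := by
          by_contra hne
          exact hiMN (mem_deltaC.1 hα' i hne)
        rw [z1, z2]
  · -- claim 3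
    exact fun v w => ⟨v + w, gcwR_add Ds v w⟩
  · -- claim 5 : weight 2^(k+l)
    refine ⟨(stdb j₀, 0), ?_, ?_⟩
    · intro h
      have hd : (((0 : Fin m → ZMod 2), stdb j₀) : _ × _) ∈ Ds := by
        rw [hDs, Finset.mem_product]
        exact ⟨zero_mem_deltaC, stdb_mem_deltaC hj₀⟩
      have hc := congrFun h (⟨(0, stdb j₀), hd⟩, 0)
      have : grayPair (dotp 0 (stdb j₀), dotp (stdb j₀) (stdb j₀)) 0 = 0 := hc
      rw [grayPair_zero, dotp_stdb] at this
      simp [stdb] at this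
    · exact weight_B hDs hMcard hNcard _ ⟨j₀, hj₀, by simp [stdb]⟩
  · -- claim 6
    intro v hv
    rcases claim4 v hv with h | h
    · rw [h]
      exact Nat.pow_le_pow_right (by norm_num) (by omega)
    · rw [h]
  · -- claim 7 : weight 2^(k+l-1)
    refine ⟨(stdb i₀, 0), ?_, ?_⟩
    · intro h
      have hd : ((stdb i₀, (0 : Fin m → ZMod 2)) : _ × _) ∈ Ds := by
        rw [hDs, Finset.mem_product]
        exact ⟨stdb_mem_deltaC hi₀M, zero_mem_deltaC⟩
      have hc := congrFun h (⟨(stdb i₀, 0), hd⟩, 1)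
      have : grayPair (dotp (stdb i₀) (stdb i₀), dotp 0 (stdb i₀)) 1 = 0 := hc
      rw [grayPair_one, dotp_stdb, dotp_zero, add_zero] at this
      simp [stdb] at this
    · refine weight_AnotB hDs hMcard hNcard _ ⟨i₀, hi₀M, by simp [stdb]⟩ ?_
      intro j hjN
      have : j ≠ i₀ := fun hji => hi₀N (hji ▸ hjN)
      simp [stdb, this]
  · -- claim 8 : self-orthogonality
    intro h3 v w
    have hred : ∀ p q p' q' : ZMod 2,
        grayPair (p, q) 0 * grayPair (p', q') 0 + grayPair (p, q) 1 * grayPair (p', q') 1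
          = p * p' + (p * q' + q * p') := by decide
    have hmain : ∑ x : {d // d ∈ Ds} × Fin 2,
        (fun (t : (Fin m → ZMod 2) × (Fin m → ZMod 2)) (j : Fin 2) =>
          grayPair (dotp t.1 v.1, dotp t.2 v.1) j * grayPair (dotp t.1 w.1, dotp t.2 w.1) j)
          x.1.1 x.2 = 0 := by
      rw [sum_pairs M N Ds hDs
        (fun t j => grayPair (dotp t.1 v.1, dotp t.2 v.1) j * grayPair (dotp t.1 w.1, dotp t.2 w.1) j)]
      have hterm : ∀ t₁ ∈ deltaC M, ∀ t₂ ∈ deltaC N,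
          grayPair (dotp t₁ v.1, dotp t₂ v.1) 0 * grayPair (dotp t₁ w.1, dotp t₂ w.1) 0 +
          grayPair (dotp t₁ v.1, dotp t₂ v.1) 1 * grayPair (dotp t₁ w.1, dotp t₂ w.1) 1
          = dotp t₁ v.1 * dotp t₁ w.1 + (dotp t₁ v.1 * dotp t₂ w.1 + dotp t₂ v.1 * dotp t₁ w.1) :=
        fun t₁ _ t₂ _ => hred _ _ _ _
      rw [Finset.sum_congr rfl (fun t₁ ht₁ => Finset.sum_congr rfl (fun t₂ ht₂ => hterm t₁ ht₁ t₂ ht₂))]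
      simp only [Finset.sum_add_distrib]
      have crossz : ∀ β γ : Fin m → ZMod 2,
          (∑ t₁ ∈ deltaC M, dotp t₁ β) * (∑ t₂ ∈ deltaC N, dotp t₂ γ) = 0 := by
        intro β γ
        by_cases hk : M.card = 1
        · rw [sum_dotp_even (by omega) γ, mul_zero]
        · rw [sum_dotp_even hk β, zero_mul]
      have T1 : ∑ t₁ ∈ deltaC M, ∑ _t₂ ∈ deltaC N, dotp t₁ v.1 * dotp t₁ w.1 = 0 := by
        apply Finset.sum_eq_zero
        intro t₁ _
        rw [Finset.sum_const, card_deltaC, nsmul_eq_mul, two_pow_cast_zero hNcard, zero_mul]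
      have T2 : ∑ t₁ ∈ deltaC M, ∑ t₂ ∈ deltaC N, dotp t₁ v.1 * dotp t₂ w.1 = 0 := by
        rw [← Finset.sum_mul_sum]
        exact crossz v.1 w.1
      have T3 : ∑ t₁ ∈ deltaC M, ∑ t₂ ∈ deltaC N, dotp t₂ v.1 * dotp t₁ w.1 = 0 := by
        have : ∀ t₁ ∈ deltaC M, ∀ t₂ ∈ deltaC N,
            dotp t₂ v.1 * dotp t₁ w.1 = dotp t₁ w.1 * dotp t₂ v.1 := fun _ _ _ _ => mul_comm _ _
        rw [Finset.sum_congr rfl (fun t₁ ht₁ => Finset.sum_congr rfl (fun t₂ ht₂ => this t₁ ht₁ t₂ ht₂)),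
          ← Finset.sum_mul_sum]
        exact crossz w.1 v.1
      rw [T1, T2, T3]
      simp
    exact hmain
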